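/- Let D ⊆ ℝ² be open and f : D → ℝ³ a regular C^{1M} immersion with ‖f_x‖ ≡ 1 and ‖f_y‖ ≡ 1. Let θ : D → (0,π) be continuous with cos θ = ⟨f_x, f_y⟩, and set N := (f_x × f_y)/sin θ. Assume N is C¹ and that ⟨f_x, N_x⟩ = 0, ⟨f_y, N_y⟩ = 0, and f_xy = (sin θ)·N on D. Then the mixed partial derivatives N_xy and N_yx exist at every point of D and N_xy = N_yx = (cos θ)·N; in particular N is C^{1M} and weakly harmonic with harmonicity factor cos θ. -/

import Mathlib

noncomputable section

open Real Set

abbrev E3 : Type := EuclideanSpace ℝ (Fin 3)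

/-- Partial derivative in the `x`-direction. -/
noncomputable def pdx {E : Type*} [NormedAddCommGroup E] [NormedSpace ℝ E]
    (f : ℝ × ℝ → E) (p : ℝ × ℝ) : E := lineDeriv ℝ f p ((1 : ℝ), (0 : ℝ))

/-- Partial derivative in the `y`-direction. -/
noncomputable def pdy {E : Type*} [NormedAddCommGroup E] [NormedSpace ℝ E]
    (f : ℝ × ℝ → E) (p : ℝ × ℝ) : E := lineDeriv ℝ f p ((0 : ℝ), (1 : ℝ))

/-- `f` is C¹ on `D`, and the mixed second partials `∂y∂x f` and `∂x∂y f`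
exist at every point of `D`, are continuous on `D`, and agree on `D`. -/
def C1M {E : Type*} [NormedAddCommGroup E] [NormedSpace ℝ E]
    (D : Set (ℝ × ℝ)) (f : ℝ × ℝ → E) : Prop :=
  ContDiffOn ℝ 1 f D ∧
  (∀ p ∈ D, LineDifferentiableAt ℝ (pdx f) p ((0 : ℝ), (1 : ℝ))) ∧
  (∀ p ∈ D, LineDifferentiableAt ℝ (pdy f) p ((1 : ℝ), (0 : ℝ))) ∧
  ContinuousOn (pdy (pdx f)) D ∧
  ContinuousOn (pdx (pdy f)) D ∧
  (∀ p ∈ D, pdy (pdx f) p = pdx (pdy f) p)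

/-- The cross product on ℝ³. -/
noncomputable def cross3 (a b : E3) : E3 :=
  (WithLp.equiv 2 (Fin 3 → ℝ)).symm
    ![a 1 * b 2 - a 2 * b 1, a 2 * b 0 - a 0 * b 2, a 0 * b 1 - a 1 * b 0]

/-- The Euclidean inner product on ℝ³. -/
noncomputable def dot (a b : E3) : ℝ := inner ℝ a b

/-- `N : D → S²` is weakly harmonic: it is C^{1M}, weakly regular, takes values in the
unit sphere, and `N_xy = N_yx = h • N` for some scalar function `h`. -/
def WeakHarmonic (D : Set (ℝ × ℝ)) (N : ℝ × ℝ → E3) : Prop :=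
  C1M D N ∧ (∀ p ∈ D, ‖N p‖ = 1) ∧
  (∀ p ∈ D, pdx N p ≠ 0 ∧ pdy N p ≠ 0) ∧
  ∃ h : ℝ × ℝ → ℝ, ∀ p ∈ D, pdy (pdx N) p = h p • N p ∧ pdx (pdy N) p = h p • N p

/-- A weakly-regular C^{1M} ps-front with associated weakly harmonic map `N`. -/
def PsFront (D : Set (ℝ × ℝ)) (f N : ℝ × ℝ → E3) : Prop :=
  C1M D f ∧ (∀ p ∈ D, pdx f p ≠ 0 ∧ pdy f p ≠ 0) ∧
  WeakHarmonic D N ∧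
  ∀ p ∈ D, pdx f p = cross3 (N p) (pdx N p) ∧ pdy f p = -cross3 (N p) (pdy N p)

/-! Unit length of `f_x, f_y` with angle `θ` gives `f_x × f_y = (sin θ) N` with `N` a unit
normal. Differentiating `‖N‖ = 1`, `⟪N, f_x⟫ = 0` and `⟪N, f_y⟫ = 0`, and using
`f_xy = (sin θ) N` and the asymptotic conditions, fixes the inner products of `N_x` and `N_y`
with `f_x`, `f_y`, `N`; since these three vectors form a basis, this forces `N_x = f_x × N` and
`N_y = N × f_y`. One more application of the product rule gives `N_xy = f_xy × N + f_x × N_y`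
and `N_yx = N_x × f_y + N × f_yx`; the terms involving `f_xy = f_yx ∥ N` vanish and the vector
triple product leaves `⟪f_x, f_y⟫ N = (cos θ) N`. -/

open Matrix WithLp
open scoped RealInnerProductSpace Topology

section CrossProduct

lemma cross3_eq_toLp (a b : E3) : cross3 a b = toLp 2 (ofLp a ⨯₃ ofLp b) := rfl

lemma inner_eq_dotProduct (a b : E3) : ⟪a, b⟫ = ofLp a ⬝ᵥ ofLp b := by
  simp [EuclideanSpace.inner_eq_star_dotProduct, dotProduct_comm]

def cross3CLM : E3 →L[ℝ] E3 →L[ℝ] E3 :=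
  let e := WithLp.linearEquiv 2 ℝ (Fin 3 → ℝ)
  LinearMap.toContinuousLinearMap <| LinearMap.toContinuousLinearMap.toLinearMap ∘ₗ
    (crossProduct.compl₁₂ e.toLinearMap e.toLinearMap).compr₂ e.symm.toLinearMap

@[simp] lemma cross3CLM_apply (a b : E3) : cross3CLM a b = cross3 a b := rfl

lemma cross3_smul_left (r : ℝ) (a b : E3) : cross3 (r • a) b = r • cross3 a b := by
  simp [← cross3CLM_apply]

lemma cross3_smul_right (r : ℝ) (a b : E3) : cross3 a (r • b) = r • cross3 a b := by
  simp [← cross3CLM_apply]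

lemma cross3_self (a : E3) : cross3 a a = 0 := by
  simp [cross3_eq_toLp, cross_self]

lemma cross3_anticomm (a b : E3) : -cross3 a b = cross3 b a := by
  rw [cross3_eq_toLp, cross3_eq_toLp, ← toLp_neg, cross_anticomm]

lemma inner_cross3_self_left (a b : E3) : ⟪a, cross3 a b⟫ = 0 := by
  simp [inner_eq_dotProduct, cross3_eq_toLp, dot_self_cross]

lemma inner_cross3_self_right (a b : E3) : ⟪b, cross3 a b⟫ = 0 := by
  simp [inner_eq_dotProduct, cross3_eq_toLp, dot_cross_self]

lemma inner_cross3 (u v w : E3) : ⟪u, cross3 v w⟫ = ⟪v, cross3 w u⟫ := by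
  rw [inner_eq_dotProduct, inner_eq_dotProduct, cross3_eq_toLp, cross3_eq_toLp]
  exact triple_product_permutation _ _ _

lemma cross3_cross3 (u v w : E3) : cross3 u (cross3 v w) = ⟪u, w⟫ • v - ⟪u, v⟫ • w := by
  simp [inner_eq_dotProduct, cross3_eq_toLp, cross_cross_eq_smul_sub_smul', dotProduct_comm]

lemma cross3_cross3' (u v w : E3) : cross3 (cross3 u v) w = ⟪u, w⟫ • v - ⟪v, w⟫ • u := by
  simp [inner_eq_dotProduct, cross3_eq_toLp, cross_cross_eq_smul_sub_smul]

lemma inner_cross3_cross3 (u v w x : E3) :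
    ⟪cross3 u v, cross3 w x⟫ = ⟪u, w⟫ * ⟪v, x⟫ - ⟪u, x⟫ * ⟪v, w⟫ := by
  simp [inner_eq_dotProduct, cross3_eq_toLp, cross_dot_cross]

lemma norm_cross3_sq (a b : E3) : ‖cross3 a b‖ ^ 2 = ‖a‖ ^ 2 * ‖b‖ ^ 2 - ⟪a, b⟫ ^ 2 := by
  rw [← real_inner_self_eq_norm_sq, ← real_inner_self_eq_norm_sq, ← real_inner_self_eq_norm_sq,
    inner_cross3_cross3, real_inner_comm b a, sq]

lemma norm_cross3_of_inner_eq_zero {a b : E3} (h : ⟪a, b⟫ = 0) : ‖cross3 a b‖ = ‖a‖ * ‖b‖ := by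
  have h2 := norm_cross3_sq a b
  rw [h, sq 0, mul_zero, sub_zero, ← mul_pow] at h2
  exact (pow_left_inj₀ (norm_nonneg _) (by positivity) two_ne_zero).mp h2

lemma norm_cross3_eq_sin {a b : E3} {θ : ℝ} (ha : ‖a‖ = 1) (hb : ‖b‖ = 1)
    (hθ : θ ∈ Ioo 0 π) (hcos : cos θ = ⟪a, b⟫) : ‖cross3 a b‖ = sin θ := by
  have h := norm_cross3_sq a b
  rw [ha, hb, ← hcos, one_pow, one_mul, ← sin_sq] at h
  exact (pow_left_inj₀ (norm_nonneg _) (sin_pos_of_mem_Ioo hθ).le two_ne_zero).mp h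

lemma eq_of_inner_eq_of_cross3_ne_zero {a b w w' : E3} (hab : cross3 a b ≠ 0)
    (ha : ⟪w, a⟫ = ⟪w', a⟫) (hb : ⟪w, b⟫ = ⟪w', b⟫)
    (hc : ⟪w, cross3 a b⟫ = ⟪w', cross3 a b⟫) : w = w' := by
  rw [← sub_eq_zero, ← norm_eq_zero]
  set d := w - w'
  have hd : cross3 d (cross3 a b) = 0 := by
    rw [cross3_cross3, inner_sub_left, inner_sub_left, ha, hb]
    simp
  -- Lagrange's identity: `d ⊥ a × b` and `d × (a × b) = 0` force `‖d‖ ‖a × b‖ = 0`.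
  have h := norm_cross3_sq d (cross3 a b)
  rw [hd, inner_sub_left, hc, sub_self, norm_zero] at h
  have hab' : ‖cross3 a b‖ ≠ 0 := norm_ne_zero_iff.mpr hab
  have : ‖d‖ ^ 2 * ‖cross3 a b‖ ^ 2 = 0 := by linarith
  simpa [hab'] using this

end CrossProduct

section LineDeriv

variable {F E G : Type*} [NormedAddCommGroup F] [NormedSpace ℝ F]
  [NormedAddCommGroup E] [InnerProductSpace ℝ E] [NormedAddCommGroup G] [NormedSpace ℝ G]
  {u v : F → E} {u' v' : E} {p w : F}

lemma HasLineDerivAt.inner (hu : HasLineDerivAt ℝ u u' p w) (hv : HasLineDerivAt ℝ v v' p w) :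
    HasLineDerivAt ℝ (fun q => ⟪u q, v q⟫) (⟪u p, v'⟫ + ⟪u', v p⟫) p w := by
  simpa [HasLineDerivAt] using HasDerivAt.inner ℝ hu hv

lemma ContinuousLinearMap.hasLineDerivAt_of_bilinear (B : E →L[ℝ] E →L[ℝ] G)
    (hu : HasLineDerivAt ℝ u u' p w) (hv : HasLineDerivAt ℝ v v' p w) :
    HasLineDerivAt ℝ (fun q => B (u q) (v q)) (B (u p) v' + B u' (v p)) p w := by
  simpa [HasLineDerivAt] using B.hasDerivAt_of_bilinear (fun _ => hu) (fun _ => hv)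

lemma HasLineDerivAt.inner_add_inner_eq_zero {c : ℝ} (hu : HasLineDerivAt ℝ u u' p w)
    (hv : HasLineDerivAt ℝ v v' p w) (hc : ∀ᶠ q in 𝓝 p, ⟪u q, v q⟫ = c) :
    ⟪u p, v'⟫ + ⟪u', v p⟫ = 0 := by
  have hconst : HasLineDerivAt ℝ (fun _ => c) 0 p w := hasDerivAt_const _ c
  exact (hu.inner hv).unique (hconst.congr_of_eventuallyEq hc)

lemma HasLineDerivAt.inner_eq_zero_of_norm_eq {c : ℝ} (hu : HasLineDerivAt ℝ u u' p w)
    (h : ∀ᶠ q in 𝓝 p, ‖u q‖ = c) : ⟪u p, u'⟫ = 0 := by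
  have := hu.inner_add_inner_eq_zero hu (c := c ^ 2)
    (h.mono fun q hq => by rw [real_inner_self_eq_norm_sq, hq])
  rw [real_inner_comm (u p) u'] at this
  linarith

end LineDeriv

lemma c1M_of_hasLineDerivAt {E : Type*} [NormedAddCommGroup E] [NormedSpace ℝ E]
    {D : Set (ℝ × ℝ)} {N g : ℝ × ℝ → E} (hN : ContDiffOn ℝ 1 N D) (hg : ContinuousOn g D)
    (hxy : ∀ p ∈ D, HasLineDerivAt ℝ (pdx N) (g p) p (0, 1))
    (hyx : ∀ p ∈ D, HasLineDerivAt ℝ (pdy N) (g p) p (1, 0)) : C1M D N :=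
  ⟨hN, fun p hp => (hxy p hp).lineDifferentiableAt, fun p hp => (hyx p hp).lineDifferentiableAt,
    hg.congr fun p hp => (hxy p hp).lineDeriv, hg.congr fun p hp => (hyx p hp).lineDeriv,
    fun p hp => (hxy p hp).lineDeriv.trans (hyx p hp).lineDeriv.symm⟩

section AsymptoticChebyshevNet

variable {f N : ℝ × ℝ → E3} {p : ℝ × ℝ} {s : ℝ}

lemma pdx_eq_cross3 (hN : DifferentiableAt ℝ N p) (hnorm : ∀ᶠ q in 𝓝 p, ‖N q‖ = 1)
    (horth : ∀ᶠ q in 𝓝 p, ⟪N q, pdy f q⟫ = 0)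
    (hfyx : HasLineDerivAt ℝ (pdy f) (s • N p) p (1, 0))
    (hframe : cross3 (pdx f p) (pdy f p) = s • N p) (hs : s ≠ 0)
    (hasym : ⟪pdx f p, pdx N p⟫ = 0) : pdx N p = cross3 (pdx f p) (N p) := by
  have hNx : HasLineDerivAt ℝ N (pdx N p) p (1, 0) := hN.lineDifferentiableAt.hasLineDerivAt
  have hNp : ‖N p‖ = 1 := hnorm.self_of_nhds
  have hNN : ⟪N p, pdx N p⟫ = 0 := hNx.inner_eq_zero_of_norm_eq hnorm
  have hNb : ⟪pdx N p, pdy f p⟫ = -s := by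
    have h := hNx.inner_add_inner_eq_zero hfyx horth
    rw [inner_smul_right, real_inner_self_eq_norm_sq, hNp] at h
    linarith
  have hab : cross3 (pdx f p) (pdy f p) ≠ 0 := by
    rw [hframe]
    exact smul_ne_zero hs (norm_ne_zero_iff.mp (by simp [hNp]))
  refine eq_of_inner_eq_of_cross3_ne_zero hab ?_ ?_ ?_
  · rw [real_inner_comm, hasym, real_inner_comm, inner_cross3_self_left]
  · rw [hNb, real_inner_comm, inner_cross3, inner_cross3, ← cross3_anticomm, hframe,
      inner_neg_right, inner_smul_right, real_inner_self_eq_norm_sq, hNp]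
    ring
  · rw [hframe, inner_smul_right, inner_smul_right, real_inner_comm, hNN, real_inner_comm,
      inner_cross3_self_right]

lemma pdy_eq_cross3 (hN : DifferentiableAt ℝ N p) (hnorm : ∀ᶠ q in 𝓝 p, ‖N q‖ = 1)
    (horth : ∀ᶠ q in 𝓝 p, ⟪N q, pdx f q⟫ = 0)
    (hfxy : HasLineDerivAt ℝ (pdx f) (s • N p) p (0, 1))
    (hframe : cross3 (pdx f p) (pdy f p) = s • N p) (hs : s ≠ 0)
    (hasym : ⟪pdy f p, pdy N p⟫ = 0) : pdy N p = cross3 (N p) (pdy f p) := by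
  have hNy : HasLineDerivAt ℝ N (pdy N p) p (0, 1) := hN.lineDifferentiableAt.hasLineDerivAt
  have hNp : ‖N p‖ = 1 := hnorm.self_of_nhds
  have hNN : ⟪N p, pdy N p⟫ = 0 := hNy.inner_eq_zero_of_norm_eq hnorm
  have hNa : ⟪pdy N p, pdx f p⟫ = -s := by
    have h := hNy.inner_add_inner_eq_zero hfxy horth
    rw [inner_smul_right, real_inner_self_eq_norm_sq, hNp] at h
    linarith
  have hab : cross3 (pdx f p) (pdy f p) ≠ 0 := by
    rw [hframe]
    exact smul_ne_zero hs (norm_ne_zero_iff.mp (by simp [hNp]))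
  refine eq_of_inner_eq_of_cross3_ne_zero hab ?_ ?_ ?_
  · rw [hNa, real_inner_comm, inner_cross3, ← cross3_anticomm, hframe, inner_neg_right,
      inner_smul_right, real_inner_self_eq_norm_sq, hNp]
    ring
  · rw [real_inner_comm, hasym, real_inner_comm, inner_cross3_self_right]
  · rw [hframe, inner_smul_right, inner_smul_right, real_inner_comm, hNN, real_inner_comm,
      inner_cross3_self_left]

lemma hasLineDerivAt_pdx_of_eq_cross3 (hN : DifferentiableAt ℝ N p)
    (hNx : ∀ᶠ q in 𝓝 p, pdx N q = cross3 (pdx f q) (N q))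
    (hNy : pdy N p = cross3 (N p) (pdy f p))
    (hfxy : HasLineDerivAt ℝ (pdx f) (s • N p) p (0, 1)) (horth : ⟪pdx f p, N p⟫ = 0) :
    HasLineDerivAt ℝ (pdx N) (⟪pdx f p, pdy f p⟫ • N p) p (0, 1) := by
  have h := (cross3CLM.hasLineDerivAt_of_bilinear hfxy
    hN.lineDifferentiableAt.hasLineDerivAt).congr_of_eventuallyEq hNx
  have hval : cross3 (pdx f p) (pdy N p) + cross3 (s • N p) (N p)
      = ⟪pdx f p, pdy f p⟫ • N p := by
    rw [hNy, cross3_cross3, cross3_smul_left, cross3_self, horth]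
    simp
  exact hval ▸ h

lemma hasLineDerivAt_pdy_of_eq_cross3 (hN : DifferentiableAt ℝ N p)
    (hNy : ∀ᶠ q in 𝓝 p, pdy N q = cross3 (N q) (pdy f q))
    (hNx : pdx N p = cross3 (pdx f p) (N p))
    (hfyx : HasLineDerivAt ℝ (pdy f) (s • N p) p (1, 0)) (horth : ⟪N p, pdy f p⟫ = 0) :
    HasLineDerivAt ℝ (pdy N) (⟪pdx f p, pdy f p⟫ • N p) p (1, 0) := by
  have h := (cross3CLM.hasLineDerivAt_of_bilinear hN.lineDifferentiableAt.hasLineDerivAt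
    hfyx).congr_of_eventuallyEq hNy
  have hval : cross3 (N p) (s • N p) + cross3 (pdx N p) (pdy f p)
      = ⟪pdx f p, pdy f p⟫ • N p := by
    rw [hNx, cross3_cross3', cross3_smul_right, cross3_self, horth]
    simp
  exact hval ▸ h

end AsymptoticChebyshevNet

theorem stmt_12_general (D : Set (ℝ × ℝ)) (hD : IsOpen D)
    (f N : ℝ × ℝ → E3) (θ : ℝ × ℝ → ℝ)
    (hf : C1M D f)
    (hE : ∀ p ∈ D, ‖pdx f p‖ = 1) (hG : ∀ p ∈ D, ‖pdy f p‖ = 1)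
    (hθc : ContinuousOn θ D) (hθr : ∀ p ∈ D, θ p ∈ Set.Ioo 0 π)
    (hcos : ∀ p ∈ D, Real.cos (θ p) = dot (pdx f p) (pdy f p))
    (hNdef : ∀ p ∈ D, N p = (Real.sin (θ p))⁻¹ • cross3 (pdx f p) (pdy f p))
    (hN : ContDiffOn ℝ 1 N D)
    (hasx : ∀ p ∈ D, dot (pdx f p) (pdx N p) = 0)
    (hasy : ∀ p ∈ D, dot (pdy f p) (pdy N p) = 0)
    (hfxy : ∀ p ∈ D, pdy (pdx f) p = Real.sin (θ p) • N p) :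
    (∀ p ∈ D, LineDifferentiableAt ℝ (pdx N) p ((0 : ℝ), (1 : ℝ))) ∧
    (∀ p ∈ D, LineDifferentiableAt ℝ (pdy N) p ((1 : ℝ), (0 : ℝ))) ∧
    (∀ p ∈ D, pdy (pdx N) p = Real.cos (θ p) • N p ∧
      pdx (pdy N) p = Real.cos (θ p) • N p) ∧
    C1M D N ∧ WeakHarmonic D N := by
  obtain ⟨-, hfx, hfy, -, -, hfsym⟩ := hf
  simp only [dot] at hcos hasx hasy
  have hsin : ∀ p ∈ D, 0 < sin (θ p) := fun p hp => sin_pos_of_mem_Ioo (hθr p hp)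
  have hframe : ∀ p ∈ D, cross3 (pdx f p) (pdy f p) = sin (θ p) • N p := fun p hp => by
    rw [hNdef p hp, smul_inv_smul₀ (hsin p hp).ne']
  have hNunit : ∀ p ∈ D, ‖N p‖ = 1 := fun p hp => by
    rw [hNdef p hp, norm_smul, norm_cross3_eq_sin (hE p hp) (hG p hp) (hθr p hp) (hcos p hp),
      norm_inv, norm_of_nonneg (hsin p hp).le, inv_mul_cancel₀ (hsin p hp).ne']
  have hNa : ∀ p ∈ D, ⟪N p, pdx f p⟫ = 0 := fun p hp => by
    rw [hNdef p hp, real_inner_smul_left, real_inner_comm, inner_cross3_self_left, mul_zero]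
  have hNb : ∀ p ∈ D, ⟪N p, pdy f p⟫ = 0 := fun p hp => by
    rw [hNdef p hp, real_inner_smul_left, real_inner_comm, inner_cross3_self_right, mul_zero]
  have hNd : ∀ p ∈ D, DifferentiableAt ℝ N p := fun p hp =>
    (hN.differentiableOn one_ne_zero).differentiableAt (hD.mem_nhds hp)
  have hfx_y : ∀ p ∈ D, HasLineDerivAt ℝ (pdx f) (sin (θ p) • N p) p (0, 1) := fun p hp =>
    hfxy p hp ▸ (hfx p hp).hasLineDerivAt
  have hfy_x : ∀ p ∈ D, HasLineDerivAt ℝ (pdy f) (sin (θ p) • N p) p (1, 0) := fun p hp =>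
    ((hfsym p hp).symm.trans (hfxy p hp)) ▸ (hfy p hp).hasLineDerivAt
  have hNx : ∀ p ∈ D, pdx N p = cross3 (pdx f p) (N p) := fun p hp =>
    pdx_eq_cross3 (hNd p hp) ((hD.eventually_mem hp).mono hNunit)
      ((hD.eventually_mem hp).mono hNb) (hfy_x p hp) (hframe p hp) (hsin p hp).ne' (hasx p hp)
  have hNy : ∀ p ∈ D, pdy N p = cross3 (N p) (pdy f p) := fun p hp =>
    pdy_eq_cross3 (hNd p hp) ((hD.eventually_mem hp).mono hNunit)
      ((hD.eventually_mem hp).mono hNa) (hfx_y p hp) (hframe p hp) (hsin p hp).ne' (hasy p hp)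
  have hNxy : ∀ p ∈ D, HasLineDerivAt ℝ (pdx N) (cos (θ p) • N p) p (0, 1) := fun p hp =>
    hcos p hp ▸ hasLineDerivAt_pdx_of_eq_cross3 (hNd p hp) ((hD.eventually_mem hp).mono hNx)
      (hNy p hp) (hfx_y p hp) (by rw [real_inner_comm]; exact hNa p hp)
  have hNyx : ∀ p ∈ D, HasLineDerivAt ℝ (pdy N) (cos (θ p) • N p) p (1, 0) := fun p hp =>
    hcos p hp ▸ hasLineDerivAt_pdy_of_eq_cross3 (hNd p hp) ((hD.eventually_mem hp).mono hNy)
      (hNx p hp) (hfy_x p hp) (hNb p hp)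
  have hC1M : C1M D N := c1M_of_hasLineDerivAt hN
    ((continuous_cos.comp_continuousOn hθc).smul hN.continuousOn) hNxy hNyx
  have hmixed : ∀ p ∈ D, pdy (pdx N) p = cos (θ p) • N p ∧ pdx (pdy N) p = cos (θ p) • N p :=
    fun p hp => ⟨(hNxy p hp).lineDeriv, (hNyx p hp).lineDeriv⟩
  refine ⟨hC1M.2.1, hC1M.2.2.1, hmixed, hC1M, hC1M, hNunit, fun p hp => ⟨?_, ?_⟩, _, hmixed⟩
  · rw [hNx p hp, ← norm_ne_zero_iff, norm_cross3_of_inner_eq_zero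
      (by rw [real_inner_comm]; exact hNa p hp), hE p hp, hNunit p hp]
    norm_num
  · rw [hNy p hp, ← norm_ne_zero_iff, norm_cross3_of_inner_eq_zero (hNb p hp), hG p hp,
      hNunit p hp]
    norm_num

/-- For a regular C^{1M} immersion in asymptotic Chebyshev coordinates with `K = −1`,
the mixed partials `N_xy` and `N_yx` of the normal exist everywhere on `D` and
`N_xy = N_yx = (cos θ) • N`; in particular `N` is C^{1M} and weakly harmonic with
harmonicity factor `cos θ`. -/
theorem stmt_12 (D : Set (ℝ × ℝ)) (hD : IsOpen D)
    (f N : ℝ × ℝ → E3) (θ : ℝ × ℝ → ℝ)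
    (hf : C1M D f)
    (hreg : ∀ p ∈ D, LinearIndependent ℝ ![pdx f p, pdy f p])
    (hE : ∀ p ∈ D, ‖pdx f p‖ = 1) (hG : ∀ p ∈ D, ‖pdy f p‖ = 1)
    (hθc : ContinuousOn θ D) (hθr : ∀ p ∈ D, θ p ∈ Set.Ioo 0 π)
    (hcos : ∀ p ∈ D, Real.cos (θ p) = dot (pdx f p) (pdy f p))
    (hNdef : ∀ p ∈ D, N p = (Real.sin (θ p))⁻¹ • cross3 (pdx f p) (pdy f p))
    (hN : ContDiffOn ℝ 1 N D)
    (hasx : ∀ p ∈ D, dot (pdx f p) (pdx N p) = 0)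
    (hasy : ∀ p ∈ D, dot (pdy f p) (pdy N p) = 0)
    (hfxy : ∀ p ∈ D, pdy (pdx f) p = Real.sin (θ p) • N p) :
    (∀ p ∈ D, LineDifferentiableAt ℝ (pdx N) p ((0 : ℝ), (1 : ℝ))) ∧
    (∀ p ∈ D, LineDifferentiableAt ℝ (pdy N) p ((1 : ℝ), (0 : ℝ))) ∧
    (∀ p ∈ D, pdy (pdx N) p = Real.cos (θ p) • N p ∧
      pdx (pdy N) p = Real.cos (θ p) • N p) ∧
    C1M D N ∧ WeakHarmonic D N :=
  stmt_12_general D hD f N θ hf hE hG hθc hθr hcos hNdef hN hasx hasy hfxy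

end
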